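/- Let m ≥ 2 be a positive integer and R = R_1 × ⋯ × R_m, where each R_i is a commutative Artinian local principal ideal ring that is not a field. Then every non-trivial ideal of R is mutually maximally distant in G(R) from some non-trivial ideal of R; in particular, the vertex set of the strong resolving graph G(R)_SR equals the vertex set of G(R). -/

import Mathlib

open SimpleGraph

/-- The type of non-trivial ideals of a commutative ring `R`
(ideals `I` with `I ≠ 0` and `I ≠ R`). -/
abbrev NontrivialIdeal (R : Type*) [CommRing R] : Type _ :=
  {I : Ideal R // I ≠ ⊥ ∧ I ≠ ⊤}

/-- The intersection graph of ideals of `R`: vertices are the non-trivial ideals,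
and distinct vertices are adjacent iff their intersection is non-zero. -/
def intersectionGraph (R : Type*) [CommRing R] : SimpleGraph (NontrivialIdeal R) where
  Adj I J := I ≠ J ∧ I.1 ⊓ J.1 ≠ ⊥
  symm := ⟨fun I J h => ⟨h.1.symm, by rw [inf_comm]; exact h.2⟩⟩
  loopless := ⟨fun I h => h.1 rfl⟩

/-- Two distinct vertices `u, v` are mutually maximally distant if
`d(v,w) ≤ d(u,v)` for every neighbour `w` of `u` and
`d(u,w) ≤ d(u,v)` for every neighbour `w` of `v`. -/
def MutuallyMaximallyDistant {V : Type*} (G : SimpleGraph V) (u v : V) : Prop :=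
  u ≠ v ∧ (∀ w, G.Adj u w → G.edist v w ≤ G.edist u v) ∧
    (∀ w, G.Adj v w → G.edist u w ≤ G.edist u v)

theorem MutuallyMaximallyDistant.symm {V : Type*} {G : SimpleGraph V} {u v : V}
    (h : MutuallyMaximallyDistant G u v) : MutuallyMaximallyDistant G v u :=
  ⟨h.1.symm,
    fun w hw => by rw [show G.edist v u = G.edist u v from G.edist_comm]; exact h.2.2 w hw,
    fun w hw => by rw [show G.edist v u = G.edist u v from G.edist_comm]; exact h.2.1 w hw⟩

/-- The strong resolving graph of `G`: `u` and `v` are adjacent iff they are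
mutually maximally distant. -/
def strongResolvingGraph {V : Type*} (G : SimpleGraph V) : SimpleGraph V where
  Adj := MutuallyMaximallyDistant G
  symm := ⟨fun _ _ h => h.symm⟩
  loopless := ⟨fun _ h => h.1 rfl⟩

/-- A vertex `w` strongly resolves `u` and `v` if `d(w,u) = d(w,v) + d(v,u)` or
`d(w,v) = d(w,u) + d(u,v)`. A set `W` is a strong resolving set if every two distinct
vertices are strongly resolved by some member of `W`. -/
def IsStrongResolvingSet {V : Type*} (G : SimpleGraph V) (W : Set V) : Prop :=
  ∀ u v : V, u ≠ v → ∃ w ∈ W,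
    G.edist w u = G.edist w v + G.edist v u ∨ G.edist w v = G.edist w u + G.edist u v

/-- The product ideal which is `Rᵢ` in the components where `I` is zero and `0` elsewhere. -/
def complIdeal {ι : Type*} (F : ι → Type*) [∀ i, CommRing (F i)] (I : Ideal (∀ i, F i)) :
    Ideal (∀ i, F i) where
  carrier := {x | ∀ i, I.map (Pi.evalRingHom F i) ≠ ⊥ → x i = 0}
  zero_mem' := fun i _ => rfl
  add_mem' := fun hx hy i hi => by
    simp only [Pi.add_apply, hx i hi, hy i hi, add_zero]
  smul_mem' := fun c x hx i hi => by
    simp only [Pi.smul_apply, smul_eq_mul, Pi.mul_apply, hx i hi, mul_zero]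

/-!
Every nonzero ideal of an Artinian local principal ideal ring contains the last nonzero power of a
generator of the maximal ideal. Hence an ideal of `R = ∏ Rᵢ` that is nonzero in every component
meets every nonzero ideal: it is a universal vertex of `G(R)`, and `G(R)` has diameter at most `2`.
Two distinct universal vertices are mutually maximally distant, and since `m ≥ 2` and no `Rᵢ` is a
field there are at least two of them. An ideal `I` vanishing in some component is instead at
distance `2` from the ideal that is `Rᵢ` exactly where `I` vanishes, since the two meet in `0`.
-/

open IsLocalRing

namespace IsLocalRing

variable {A : Type*} [CommRing A] [IsLocalRing A]

theorem exists_eq_pow_mul_isUnit {t a : A} (ht : maximalIdeal A = Ideal.span {t})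
    (hnil : IsNilpotent t) (ha : a ≠ 0) : ∃ (k : ℕ) (u : A), IsUnit u ∧ a = t ^ k * u := by
  obtain ⟨n, hn⟩ := hnil
  have hfin : FiniteMultiplicity t a := ⟨n, fun h => ha (by simpa [pow_succ, hn] using h)⟩
  obtain ⟨u, hau, htu⟩ := hfin.exists_eq_pow_mul_and_not_dvd
  refine ⟨_, u, ?_, hau⟩
  by_contra hu
  exact htu (Ideal.mem_span_singleton.mp (ht ▸ (mem_maximalIdeal u).mpr hu))

theorem pow_pred_nilpotencyClass_mem {t : A} (ht : maximalIdeal A = Ideal.span {t})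
    (hnil : IsNilpotent t) {N : Ideal A} (hN : N ≠ ⊥) : t ^ (nilpotencyClass t - 1) ∈ N := by
  obtain ⟨a, haN, ha⟩ := Submodule.exists_mem_ne_zero_of_ne_bot hN
  obtain ⟨k, u, hu, rfl⟩ := exists_eq_pow_mul_isUnit ht hnil ha
  have hk : k ≤ nilpotencyClass t - 1 := by
    by_contra! h
    exact ha (by rw [pow_eq_zero_of_le (by omega) (pow_nilpotencyClass hnil), zero_mul])
  rw [← Nat.add_sub_cancel' hk, pow_add]
  exact N.mul_mem_right _ ((Ideal.mul_unit_mem_iff_mem N hu).mp haN)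

variable (A) in
/-- The witness is `t ^ (e - 1)`, where `t` generates the maximal ideal and `e` is the nilpotency
class of `t`. -/
theorem exists_ne_zero_forall_mem_of_ne_bot [IsArtinianRing A] [IsPrincipalIdealRing A] :
    ∃ s : A, s ≠ 0 ∧ ∀ N : Ideal A, N ≠ ⊥ → s ∈ N := by
  obtain ⟨t, ht⟩ := Submodule.IsPrincipal.principal (maximalIdeal A)
  have hnil : IsNilpotent t := Ring.KrullDimLE.isNilpotent_iff_mem_maximalIdeal.mpr
    (ht ▸ Ideal.mem_span_singleton_self t)
  exact ⟨_, pow_pred_nilpotencyClass hnil, fun N hN => pow_pred_nilpotencyClass_mem ht hnil hN⟩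

end IsLocalRing

namespace MutuallyMaximallyDistant

variable {V : Type*} {G : SimpleGraph V} {u v : V}

theorem of_eccent_le (huv : u ≠ v) (hu : G.eccent u ≤ G.edist u v)
    (hv : G.eccent v ≤ G.edist u v) : MutuallyMaximallyDistant G u v :=
  ⟨huv, fun _ _ => G.edist_le_eccent.trans hv, fun _ _ => G.edist_le_eccent.trans hu⟩

theorem of_eccent_le_one (huv : u ≠ v) (hu : G.eccent u ≤ 1) (hv : G.eccent v ≤ 1) :
    MutuallyMaximallyDistant G u v :=
  have h1 : 1 ≤ G.edist u v := Order.one_le_iff_pos.mpr (G.edist_pos_of_ne huv)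
  of_eccent_le huv (hu.trans h1) (hv.trans h1)

theorem of_not_adj {c : V} (hc : G.eccent c ≤ 1) (huv : u ≠ v) (hadj : ¬ G.Adj u v) :
    MutuallyMaximallyDistant G u v := by
  have h2 : 2 ≤ G.edist u v := by
    have h1 : 1 < G.edist u v :=
      not_le.mp fun h => (G.edist_le_one_iff_adj_or_eq.mp h).elim hadj huv
    exact Order.add_one_le_of_lt h1
  have hdiam : G.ediam ≤ 2 := calc
    G.ediam ≤ 2 * G.eccent c := G.ediam_le_two_mul_eccent c
    _ ≤ 2 * 1 := by gcongr
    _ = 2 := mul_one 2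
  have hecc (w : V) : G.eccent w ≤ G.edist u v := G.eccent_le_ediam.trans (hdiam.trans h2)
  exact of_eccent_le huv (hecc u) (hecc v)

end MutuallyMaximallyDistant

section Pi

variable {ι : Type*} {R : ι → Type*} [∀ i, CommRing (R i)]

theorem Ideal.single_mem_of_mem_map_evalRingHom [DecidableEq ι] {I : Ideal (∀ i, R i)} {i : ι}
    {a : R i} (ha : a ∈ I.map (Pi.evalRingHom R i)) : Pi.single i a ∈ I := by
  obtain ⟨y, hy, rfl⟩ := (Ideal.mem_map_iff_of_surjective _ (Function.surjective_eval i)).mp ha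
  simpa [← Pi.single_mul_left] using I.mul_mem_left (Pi.single i 1) hy

theorem Ideal.exists_map_evalRingHom_ne_bot {I : Ideal (∀ i, R i)} (hI : I ≠ ⊥) :
    ∃ i, I.map (Pi.evalRingHom R i) ≠ ⊥ := by
  obtain ⟨x, hxI, hx⟩ := Submodule.exists_mem_ne_zero_of_ne_bot hI
  obtain ⟨i, hi⟩ := Function.ne_iff.mp hx
  exact ⟨i, (Submodule.ne_bot_iff _).mpr ⟨x i, Ideal.mem_map_of_mem _ hxI, hi⟩⟩

theorem inf_complIdeal_eq_bot (I : Ideal (∀ i, R i)) : I ⊓ complIdeal R I = ⊥ := by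
  refine (Submodule.eq_bot_iff _).mpr fun x ⟨hxI, hxJ⟩ => funext fun i => ?_
  by_cases hi : I.map (Pi.evalRingHom R i) = ⊥
  · simpa [hi] using Ideal.mem_map_of_mem (Pi.evalRingHom R i) hxI
  · exact hxJ i hi

theorem complIdeal_ne_bot [DecidableEq ι] {I : Ideal (∀ i, R i)} {i : ι} [Nontrivial (R i)]
    (hi : I.map (Pi.evalRingHom R i) = ⊥) : complIdeal R I ≠ ⊥ :=
  (Submodule.ne_bot_iff _).mpr ⟨Pi.single i 1,
    fun j hj => Pi.single_eq_of_ne (by rintro rfl; exact hj hi) 1, by simp⟩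

theorem complIdeal_ne_top {I : Ideal (∀ i, R i)} (hI : I ≠ ⊥) : complIdeal R I ≠ ⊤ := by
  intro h
  obtain ⟨i, hi⟩ := Ideal.exists_map_evalRingHom_ne_bot hI
  have h1 : (1 : R i) = 0 := (h ▸ Submodule.mem_top : (1 : ∀ i, R i) ∈ complIdeal R I) i hi
  have := subsingleton_of_zero_eq_one h1.symm
  exact hi (Subsingleton.elim _ _)

theorem intersectionGraph_exists_not_adj_of_map_evalRingHom_eq_bot
    (I : NontrivialIdeal (∀ i, R i)) {i : ι} [Nontrivial (R i)]
    (hi : I.1.map (Pi.evalRingHom R i) = ⊥) :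
    ∃ J, I ≠ J ∧ ¬ (intersectionGraph (∀ i, R i)).Adj I J := by
  classical
  refine ⟨⟨complIdeal R I.1, complIdeal_ne_bot hi, complIdeal_ne_top I.2.1⟩, fun h => ?_,
    fun h => h.2 (inf_complIdeal_eq_bot I.1)⟩
  have hI : I.1 = complIdeal R I.1 := congrArg Subtype.val h
  have := inf_complIdeal_eq_bot I.1
  rw [← hI, inf_idem] at this
  exact I.2.1 this

theorem intersectionGraph_eccent_le_one
    (hsocle : ∀ i, ∃ s : R i, s ≠ 0 ∧ ∀ N : Ideal (R i), N ≠ ⊥ → s ∈ N)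
    {U : NontrivialIdeal (∀ i, R i)} (hU : ∀ i, U.1.map (Pi.evalRingHom R i) ≠ ⊥) :
    (intersectionGraph (∀ i, R i)).eccent U ≤ 1 := by
  classical
  refine (SimpleGraph.eccent_le_one_iff U).mpr fun W hUW => ⟨hUW, ?_⟩
  obtain ⟨i, hi⟩ := Ideal.exists_map_evalRingHom_ne_bot W.2.1
  obtain ⟨s, hs0, hs⟩ := hsocle i
  exact (Submodule.ne_bot_iff _).mpr ⟨Pi.single i s,
    ⟨Ideal.single_mem_of_mem_map_evalRingHom (hs _ (hU i)),
      Ideal.single_mem_of_mem_map_evalRingHom (hs _ hi)⟩, by simpa using hs0⟩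

theorem exists_nontrivialIdeal_map_evalRingHom_eq_top [∀ i, IsLocalRing (R i)]
    (hnf : ∀ i, ¬ IsField (R i)) {j k : ι} (hjk : j ≠ k) :
    ∃ U : NontrivialIdeal (∀ i, R i), (∀ i, U.1.map (Pi.evalRingHom R i) ≠ ⊥) ∧
      U.1.map (Pi.evalRingHom R j) = ⊤ ∧ U.1.map (Pi.evalRingHom R k) ≠ ⊤ := by
  classical
  set f : ∀ i, Ideal (R i) := Function.update (fun i => maximalIdeal (R i)) j ⊤
  have hmap : ∀ i, (Ideal.pi f).map (Pi.evalRingHom R i) = f i := Ideal.map_evalRingHom_pi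
  have hf : ∀ i, f i ≠ ⊥ := by
    intro i
    rcases eq_or_ne i j with rfl | hij
    · simp [f]
    · simpa [f, hij, ← isField_iff_maximalIdeal_eq] using hnf i
  have hfk : f k ≠ ⊤ := by simpa [f, hjk.symm] using (maximalIdeal.isMaximal (R k)).ne_top
  refine ⟨⟨Ideal.pi f, fun h => hf j ?_, fun h => hfk ?_⟩, ?_, ?_, ?_⟩
  · rw [← hmap, h, Ideal.map_bot]
  · rw [← hmap, h, Ideal.map_top]
  · simpa only [hmap] using hf
  · simp [hmap, f]
  · simpa only [hmap] using hfk

end Pi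

theorem statement7 (m : ℕ) (hm : 2 ≤ m) (R : Fin m → Type*) [∀ i, CommRing (R i)]
    [∀ i, IsArtinianRing (R i)] [∀ i, IsLocalRing (R i)] [∀ i, IsPrincipalIdealRing (R i)]
    (hnf : ∀ i, ¬ IsField (R i)) :
    ∀ I : NontrivialIdeal (∀ i, R i), ∃ J : NontrivialIdeal (∀ i, R i),
      MutuallyMaximallyDistant (intersectionGraph (∀ i, R i)) I J := by
  have hsocle i := exists_ne_zero_forall_mem_of_ne_bot (R i)
  have : Nontrivial (Fin m) := Fin.nontrivial_iff_two_le.mpr hm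
  obtain ⟨j, k, hjk⟩ := exists_pair_ne (Fin m)
  obtain ⟨U, hU, hUj, -⟩ := exists_nontrivialIdeal_map_evalRingHom_eq_top hnf hjk
  obtain ⟨V, hV, -, hVj⟩ := exists_nontrivialIdeal_map_evalRingHom_eq_top hnf hjk.symm
  have hUV : U ≠ V := fun h => hVj (h ▸ hUj)
  have hUe := intersectionGraph_eccent_le_one hsocle hU
  have hVe := intersectionGraph_eccent_le_one hsocle hV
  intro I
  by_cases hI : ∀ i, I.1.map (Pi.evalRingHom R i) ≠ ⊥
  · have hIe := intersectionGraph_eccent_le_one hsocle hI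
    by_cases hIU : I = U
    · exact ⟨V, .of_eccent_le_one (hIU ▸ hUV) hIe hVe⟩
    · exact ⟨U, .of_eccent_le_one hIU hIe hUe⟩
  · push Not at hI
    obtain ⟨i, hi⟩ := hI
    obtain ⟨J, hIJ, hadj⟩ := intersectionGraph_exists_not_adj_of_map_evalRingHom_eq_bot I hi
    exact ⟨J, .of_not_adj hUe hIJ hadj⟩
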